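/- arXiv:1811.07221 — 2 statements merged into one kernel-verified Lean document; each statement's English description precedes it below -/
import Mathlib

section
/- For every integer k ≥ 1 with k ≡ 1 (mod 6), there exists a finite simple graph G with maximum degree at most 3 and with exactly (13/6)(k−1) vertices such that every induced subgraph H of G has rep(H) ≤ k−1, i.e., in every induced subgraph no degree value is attained by more than k−1 vertices. (Equivalently, g(k,3) ≥ (13/6)(k−1) for infinitely many k. A witnessing graph is the disjoint union of (k−1)/6 copies of each of: a single vertex K_1, an edge K_2, the path P_4 on four vertices, and the complement of the 6-cycle C_6.) -/
/-!
The witness is `(k - 1) / 6` disjoint copies of `K₁ + K₂ + P₄ + C̄₆`, a 13-vertex graph of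
maximum degree 3. In an induced subgraph of a disjoint union, degrees are computed inside each
component, so for every `j` the number of vertices of degree `j` is the sum of the corresponding
numbers for the components. For `j = 0, 1, 2, 3` these are at most `(1,0,0,0)`, `(1,2,0,0)`,
`(2,2,2,0)` and `(2,2,4,6)` for induced subgraphs of `K₁`, `K₂`, `P₄`, `C̄₆` respectively (a finite
check), and for each `j` the four bounds add up to `6`; so each of the `(k - 1) / 6` copies
contributes at most `6` vertices of any given degree.
-/

/-- The degree of a vertex: the number of its neighbors (graph on a finite type). -/
noncomputable def ndeg {V : Type*} (G : SimpleGraph V) (v : V) : ℕ :=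
  (G.neighborSet v).ncard

/-- The number of vertices of `G` whose degree equals `j`. -/
noncomputable def repCount {V : Type*} (G : SimpleGraph V) (j : ℕ) : ℕ :=
  {v : V | ndeg G v = j}.ncard

open Finset SimpleGraph

instance (n : ℕ) : DecidableRel (pathGraph n).Adj :=
  fun _ _ => decidable_of_iff _ pathGraph_adj.symm

variable {V W ι : Type*} {G : SimpleGraph V} {H : SimpleGraph W}

def InducedRepLE (G : SimpleGraph V) (f : ℕ → ℕ) : Prop :=
  ∀ (s : Set V) (j : ℕ), repCount (G.induce s) j ≤ f j

theorem ndeg_eq_degree (v : V) [Fintype (G.neighborSet v)] : ndeg G v = G.degree v := by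
  rw [ndeg, Set.ncard_eq_toFinset_card', ← neighborFinset_def, card_neighborFinset_eq_degree]

theorem ndeg_iso {G' : SimpleGraph W} (φ : G ≃g G') (v : V) : ndeg G' (φ v) = ndeg G v := by
  rw [ndeg, ← φ.image_neighborSet, Set.ncard_image_of_injective _ φ.injective, ndeg]

theorem ndeg_sum_inl (v : V) : ndeg (G ⊕g H) (.inl v) = ndeg G v := by
  rw [ndeg, neighborSet_sum_inl, Set.ncard_image_of_injective _ Sum.inl_injective, ndeg]

theorem ndeg_sum_inr (w : W) : ndeg (G ⊕g H) (.inr w) = ndeg H w := by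
  rw [ndeg, neighborSet_sum_inr, Set.ncard_image_of_injective _ Sum.inr_injective, ndeg]

theorem ndeg_bot_boxProd (x : ι × W) : ndeg ((⊥ : SimpleGraph ι) □ H) x = ndeg H x.2 := by
  rw [ndeg, neighborSet_boxProd, neighborSet_bot, Set.empty_prod, Set.empty_union,
    Set.singleton_prod, Set.ncard_image_of_injective _ (Prod.mk_right_injective x.1), ndeg]

theorem ndeg_induce (s : Set V) (v : s) :
    ndeg (G.induce s) v = (s ∩ G.neighborSet v).ncard := by
  rw [ndeg, neighborSet_induce, ← Set.ncard_image_of_injective _ Subtype.val_injective,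
    Subtype.image_preimage_coe]

theorem repCount_induce (s : Set V) (j : ℕ) :
    repCount (G.induce s) j = {v | v ∈ s ∧ (s ∩ G.neighborSet v).ncard = j}.ncard := by
  rw [repCount, ← Set.ncard_image_of_injective _ Subtype.val_injective]
  congr 1
  ext v
  simp [ndeg_induce, and_comm]

theorem repCount_induce_coe_finset [Fintype V] [DecidableEq V] [DecidableRel G.Adj]
    (t : Finset V) (j : ℕ) :
    repCount (G.induce t) j = #{v ∈ t | #{w ∈ t | G.Adj v w} = j} := by
  have hdeg (v : V) : ((t : Set V) ∩ G.neighborSet v).ncard = #{w ∈ t | G.Adj v w} := by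
    rw [← Set.ncard_coe_finset, coe_filter]
    rfl
  rw [repCount_induce, ← Set.ncard_coe_finset, coe_filter]
  simp only [hdeg]
  rfl

theorem repCount_induce_eq_of_subset_range (φ : H ↪g G) {t : Set V} (ht : t ⊆ Set.range φ)
    (j : ℕ) : repCount (G.induce t) j = repCount (H.induce (φ ⁻¹' t)) j := by
  have hdeg (u : W) : (φ ⁻¹' t ∩ H.neighborSet u).ncard = (t ∩ G.neighborSet (φ u)).ncard := by
    rw [← φ.preimage_neighborSet, ← Set.preimage_inter,
      Set.ncard_preimage_of_injective_subset_range φ.injective (Set.inter_subset_left.trans ht)]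
  rw [repCount_induce, repCount_induce, ← Set.ncard_preimage_of_injective_subset_range φ.injective
    (fun v hv => ht hv.1)]
  simp only [hdeg]
  rfl

theorem repCount_induce_le_sum [Fintype ι] (π : V → ι) (hπ : ∀ ⦃x y⦄, G.Adj x y → π x = π y)
    (s : Set V) (j : ℕ) :
    repCount (G.induce s) j ≤ ∑ i, repCount (G.induce (s ∩ π ⁻¹' {i})) j := by
  have hfiber (v : V) : s ∩ π ⁻¹' {π v} ∩ G.neighborSet v = s ∩ G.neighborSet v := by
    ext w
    simp only [Set.mem_inter_iff, Set.mem_preimage, Set.mem_singleton_iff, mem_neighborSet]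
    exact ⟨fun h => ⟨h.1.1, h.2⟩, fun h => ⟨⟨h.1, (hπ h.2).symm⟩, h.2⟩⟩
  have hsplit : {v | v ∈ s ∧ (s ∩ G.neighborSet v).ncard = j} =
      ⋃ i ∈ univ, {v | v ∈ s ∩ π ⁻¹' {i} ∧ (s ∩ π ⁻¹' {i} ∩ G.neighborSet v).ncard = j} := by
    ext v
    simp only [Set.mem_ofPred_eq, mem_univ, Set.iUnion_true, Set.mem_iUnion, Set.mem_inter_iff,
      Set.mem_preimage, Set.mem_singleton_iff]
    constructor
    · rintro ⟨hv, hdeg⟩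
      exact ⟨π v, ⟨hv, rfl⟩, by rwa [hfiber]⟩
    · rintro ⟨i, ⟨hv, rfl⟩, hdeg⟩
      exact ⟨hv, by rwa [hfiber] at hdeg⟩
  simp only [repCount_induce]
  rw [hsplit]
  exact set_ncard_biUnion_le _ _

namespace InducedRepLE

variable {f g : ℕ → ℕ}

theorem mono (h : InducedRepLE G f) (hfg : f ≤ g) : InducedRepLE G g :=
  fun s j => (h s j).trans (hfg j)

theorem of_iso {G' : SimpleGraph W} (φ : G ≃g G') (h : InducedRepLE G f) : InducedRepLE G' f := by
  intro s j
  rw [repCount_induce_eq_of_subset_range φ.toEmbedding (fun x _ => ⟨φ.symm x, by simp⟩)]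
  exact h _ j

theorem sum (hG : InducedRepLE G f) (hH : InducedRepLE H g) : InducedRepLE (G ⊕g H) (f + g) := by
  intro s j
  refine (repCount_induce_le_sum Sum.isLeft ?_ s j).trans ?_
  · rintro (x | x) (y | y) hxy <;> simp_all
  rw [Fintype.sum_bool,
    repCount_induce_eq_of_subset_range Embedding.sumInl (by rintro (x | x) ⟨-, h⟩ <;> simp_all),
    repCount_induce_eq_of_subset_range Embedding.sumInr (by rintro (x | x) ⟨-, h⟩ <;> simp_all)]
  exact add_le_add (hG _ j) (hH _ j)

theorem bot_boxProd [Fintype ι] (h : InducedRepLE H f) :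
    InducedRepLE ((⊥ : SimpleGraph ι) □ H) (fun j => Fintype.card ι * f j) := by
  intro s j
  refine (repCount_induce_le_sum Prod.fst (fun x y hxy => ?_) s j).trans ?_
  · simp only [boxProd_adj, bot_adj, false_and, false_or] at hxy
    exact hxy.2
  calc _ ≤ ∑ _i : ι, f j := sum_le_sum fun i _ => ?_
    _ = Fintype.card ι * f j := by simp
  rw [repCount_induce_eq_of_subset_range (boxProdRight ⊥ H i)]
  · exact h _ j
  · rintro ⟨a, b⟩ ⟨-, rfl⟩
    exact ⟨b, rfl⟩

theorem of_forall_finset [Fintype V] [DecidableEq V] [DecidableRel G.Adj]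
    (h : ∀ t : Finset V, ∀ v ∈ t,
      #{w ∈ t | #{u ∈ t | G.Adj w u} = #{u ∈ t | G.Adj v u}} ≤ f #{u ∈ t | G.Adj v u}) :
    InducedRepLE G f := by
  classical
  intro s j
  rw [← Set.coe_toFinset s, repCount_induce_coe_finset]
  by_cases hj : ∃ v ∈ s.toFinset, #{u ∈ s.toFinset | G.Adj v u} = j
  · obtain ⟨v, hv, rfl⟩ := hj
    exact h _ v hv
  · push Not at hj
    rw [filter_false_of_mem hj, card_empty]
    exact Nat.zero_le _

end InducedRepLE

theorem inducedRepLE_completeGraph_fin_one :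
    InducedRepLE (completeGraph (Fin 1)) ([1].getD · 0) :=
  .of_forall_finset (by decide)

theorem inducedRepLE_completeGraph_fin_two :
    InducedRepLE (completeGraph (Fin 2)) ([1, 2].getD · 0) :=
  .of_forall_finset (by decide)

theorem inducedRepLE_pathGraph_four : InducedRepLE (pathGraph 4) ([2, 2, 2].getD · 0) :=
  .of_forall_finset (by decide)

theorem inducedRepLE_compl_cycleGraph_six :
    InducedRepLE (cycleGraph 6)ᶜ ([2, 2, 4, 6].getD · 0) :=
  .of_forall_finset (by decide)

def blockGraph : SimpleGraph (((Fin 1 ⊕ Fin 2) ⊕ Fin 4) ⊕ Fin 6) :=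
  completeGraph (Fin 1) ⊕g completeGraph (Fin 2) ⊕g pathGraph 4 ⊕g (cycleGraph 6)ᶜ

theorem inducedRepLE_blockGraph : InducedRepLE blockGraph fun _ => 6 := by
  refine (((inducedRepLE_completeGraph_fin_one.sum inducedRepLE_completeGraph_fin_two).sum
    inducedRepLE_pathGraph_four).sum inducedRepLE_compl_cycleGraph_six).mono fun j => ?_
  rcases j with _ | _ | _ | _ | j <;> simp

theorem ndeg_blockGraph_le (x : ((Fin 1 ⊕ Fin 2) ⊕ Fin 4) ⊕ Fin 6) : ndeg blockGraph x ≤ 3 := by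
  rcases x with ((v | v) | v) | v <;> simp only [blockGraph, ndeg_sum_inl, ndeg_sum_inr] <;>
    rw [ndeg_eq_degree] <;> revert v <;> decide

theorem stmt_5_general (k : ℕ) (hk6 : k % 6 = 1) :
    ∃ (n : ℕ) (G : SimpleGraph (Fin n)),
      (∀ v, ndeg G v ≤ 3) ∧
      6 * n = 13 * (k - 1) ∧
      ∀ (s : Set (Fin n)) (j : ℕ), repCount (G.induce s) j ≤ k - 1 := by
  obtain ⟨m, hm⟩ : ∃ m, k - 1 = 6 * m := ⟨(k - 1) / 6, by omega⟩
  have hcard : Fintype.card (Fin m × (((Fin 1 ⊕ Fin 2) ⊕ Fin 4) ⊕ Fin 6)) = 13 * m := by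
    simp [mul_comm]
  let φ := ((⊥ : SimpleGraph (Fin m)) □ blockGraph).overFinIso hcard
  refine ⟨13 * m, ((⊥ : SimpleGraph (Fin m)) □ blockGraph).overFin hcard, fun v => ?_, by omega,
    fun s j => ?_⟩
  · rw [← φ.apply_symm_apply v, ndeg_iso, ndeg_bot_boxProd]
    exact ndeg_blockGraph_le _
  · simpa [hm, mul_comm] using (inducedRepLE_blockGraph.bot_boxProd.of_iso φ) s j

/-- For every `k ≡ 1 (mod 6)` there is a graph with maximum degree at most `3` and exactly
`(13/6)(k-1)` vertices in which every induced subgraph has every degree value attained by at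
most `k-1` vertices, i.e. `g(k,3) ≥ (13/6)(k-1)` for infinitely many `k`. -/
theorem stmt_5 (k : ℕ) (hk : 1 ≤ k) (hk6 : k % 6 = 1) :
    ∃ (n : ℕ) (G : SimpleGraph (Fin n)),
      (∀ v, ndeg G v ≤ 3) ∧
      6 * n = 13 * (k - 1) ∧
      ∀ (s : Set (Fin n)) (j : ℕ), repCount (G.induce s) j ≤ k - 1 :=
  stmt_5_general k hk6
end

section
/- For every integer k ≥ 1 there exists a finite simple graph G with maximum degree at most 1 and with exactly ⌊3(k−1)/2⌋ vertices such that every induced subgraph H of G has rep(H) ≤ k−1. (Together with the matching upper bound, this shows g(k,1) = h(k,1) = f(k,1) = ⌊3(k−1)/2⌋. A witnessing graph is the disjoint union of ⌊(k−1)/2⌋ copies of an edge K_2 and ⌈(k−1)/2⌉ isolated vertices.) -/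
open Set

section Degree

variable {V : Type*} [Finite V]

theorem ndeg_induce_le (G : SimpleGraph V) (s : Set V) (v : s) :
    ndeg (G.induce s) v ≤ ndeg G v :=
  ncard_le_ncard_of_injOn Subtype.val (fun _ hw => hw) Subtype.val_injective.injOn

theorem repCount_induce_le (G : SimpleGraph V) (s : Set V) (j : ℕ) :
    repCount (G.induce s) j ≤ {v | j ≤ ndeg G v}.ncard :=
  ncard_le_ncard_of_injOn Subtype.val (fun v hv => hv ▸ ndeg_induce_le G s v)
    Subtype.val_injective.injOn

end Degree

def fiberGraph {V α : Type*} (f : V → α) : SimpleGraph V where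
  Adj a b := a ≠ b ∧ f a = f b
  symm := ⟨fun _ _ h => ⟨h.1.symm, h.2.symm⟩⟩
  loopless := ⟨fun _ h => h.1 rfl⟩

section FiberGraph

variable {V α : Type*} (f : V → α)

@[simp]
theorem fiberGraph_adj {a b : V} : (fiberGraph f).Adj a b ↔ a ≠ b ∧ f a = f b :=
  Iff.rfl

theorem induce_fiberGraph (s : Set V) :
    (fiberGraph f).induce s = fiberGraph (f ∘ Subtype.val) := by
  ext a b
  simp [Subtype.ext_iff]

theorem ndeg_fiberGraph_le_one [Finite V]
    (hf : ∀ u v w, f u = f w → f v = f w → u = v ∨ u = w ∨ v = w) (w : V) :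
    ndeg (fiberGraph f) w ≤ 1 := by
  refine (ncard_le_one_iff_subsingleton).mpr fun u hu v hv => ?_
  rcases hf u v w hu.2.symm hv.2.symm with h | h | h
  exacts [h, absurd h.symm hu.1, absurd h.symm hv.1]

theorem repCount_fiberGraph_zero_le [Finite V] [Finite α] :
    repCount (fiberGraph f) 0 ≤ Nat.card α := by
  have hinj : InjOn f {v | ndeg (fiberGraph f) v = 0} := by
    intro v hv w _ hvw
    by_contra hne
    have hw : w ∈ (fiberGraph f).neighborSet v := ⟨hne, hvw⟩
    rw [mem_ofPred_eq, ndeg, ncard_eq_zero] at hv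
    simp [hv] at hw
  rw [repCount, ← hinj.ncard_image]
  exact ncard_le_card _

end FiberGraph

/-- For `i < m / 2` the vertices `2i` and `2i + 1` form block `i`; the remaining `⌈m/2⌉`
vertices are singleton blocks. -/
def pairBlock (m : ℕ) (v : Fin (3 * m / 2)) : Fin m :=
  ⟨if (v : ℕ) < 2 * (m / 2) then (v : ℕ) / 2 else (v : ℕ) - m / 2, by
    have := v.isLt
    split_ifs <;> omega⟩

theorem pairBlock_val (m : ℕ) (v : Fin (3 * m / 2)) :
    (pairBlock m v : ℕ) = if (v : ℕ) < 2 * (m / 2) then (v : ℕ) / 2 else (v : ℕ) - m / 2 :=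
  rfl

theorem ndeg_fiberGraph_pairBlock_le_one (m : ℕ) (v : Fin (3 * m / 2)) :
    ndeg (fiberGraph (pairBlock m)) v ≤ 1 := by
  refine ndeg_fiberGraph_le_one _ (fun a b c hac hbc => ?_) v
  simp only [Fin.ext_iff, pairBlock_val] at hac hbc ⊢
  split_ifs at hac hbc <;> omega

theorem lt_of_pairBlock_eq {m : ℕ} {v w : Fin (3 * m / 2)} (hvw : v ≠ w)
    (h : pairBlock m v = pairBlock m w) : (v : ℕ) < 2 * (m / 2) := by
  rw [Ne, Fin.ext_iff] at hvw
  rw [Fin.ext_iff, pairBlock_val, pairBlock_val] at h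
  split_ifs at h <;> omega

theorem ncard_setOf_one_le_ndeg_pairBlock_le (m : ℕ) :
    {v | 1 ≤ ndeg (fiberGraph (pairBlock m)) v}.ncard ≤ m := by
  calc {v | 1 ≤ ndeg (fiberGraph (pairBlock m)) v}.ncard
      ≤ (Iio m).ncard := by
        refine ncard_le_ncard_of_injOn Fin.val (fun v hv => ?_) Fin.val_injective.injOn
          (finite_Iio m)
        obtain ⟨w, hvw, hf⟩ := nonempty_of_ncard_ne_zero (Nat.one_le_iff_ne_zero.mp hv)
        have := lt_of_pairBlock_eq hvw hf
        exact mem_Iio.mpr (by omega)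
    _ = m := by simp

theorem stmt_16_general (k : ℕ) :
    ∃ (n : ℕ) (G : SimpleGraph (Fin n)),
      (∀ v, ndeg G v ≤ 1) ∧
      n = 3 * (k - 1) / 2 ∧
      ∀ (s : Set (Fin n)) (j : ℕ), repCount (G.induce s) j ≤ k - 1 := by
  refine ⟨_, fiberGraph (pairBlock (k - 1)), ndeg_fiberGraph_pairBlock_le_one _, rfl,
    fun s j => ?_⟩
  rcases j with _ | j
  · rw [induce_fiberGraph]
    simpa using repCount_fiberGraph_zero_le (pairBlock (k - 1) ∘ Subtype.val)
  · calc repCount _ (j + 1)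
        ≤ {v | j + 1 ≤ ndeg (fiberGraph (pairBlock (k - 1))) v}.ncard :=
          repCount_induce_le _ s _
      _ ≤ {v | 1 ≤ ndeg (fiberGraph (pairBlock (k - 1))) v}.ncard :=
          ncard_le_ncard fun v hv => (Nat.le_add_left 1 j).trans hv
      _ ≤ k - 1 := ncard_setOf_one_le_ndeg_pairBlock_le _

/-- For every `k ≥ 1` there is a graph with maximum degree at most `1` and exactly
`⌊3(k-1)/2⌋` vertices in which every induced subgraph has every degree value attained by at
most `k-1` vertices, i.e. `g(k,1) ≥ ⌊3(k-1)/2⌋`. -/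
theorem stmt_16 (k : ℕ) (hk : 1 ≤ k) :
    ∃ (n : ℕ) (G : SimpleGraph (Fin n)),
      (∀ v, ndeg G v ≤ 1) ∧
      n = 3 * (k - 1) / 2 ∧
      ∀ (s : Set (Fin n)) (j : ℕ), repCount (G.induce s) j ≤ k - 1 :=
  stmt_16_general k
end
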